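/- There is a sentence ψ of L_{ω₁,ω} and a structure A such that for every elementary extension B of A satisfying ψ there is a proper elementary extension C of B satisfying ¬ψ, and for every elementary extension B of A satisfying ¬ψ there is a proper elementary extension C of B satisfying ψ. -/

import Mathlib

open FirstOrder

universe u

namespace InfinitaryForcing

variable (L : FirstOrder.Language.{u, u})

/-- Infinitary formulas of `L_{∞,ω}`: set-indexed conjunctions and disjunctions,
finitary quantification, free variables among `Fin n`. -/
inductive InfForm : ℕ → Type (u + 1)
  | equal {n : ℕ} (t₁ t₂ : L.Term (Fin n)) : InfForm n
  | rel {n l : ℕ} (R : L.Relations l) (ts : Fin l → L.Term (Fin n)) : InfForm n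
  | not {n : ℕ} (φ : InfForm n) : InfForm n
  | disj {n : ℕ} {ι : Type u} (Φ : ι → InfForm n) : InfForm n
  | conj {n : ℕ} {ι : Type u} (Φ : ι → InfForm n) : InfForm n
  | ex {n : ℕ} (φ : InfForm (n + 1)) : InfForm n
  | all {n : ℕ} (φ : InfForm (n + 1)) : InfForm n

variable {L}

/-- Tarskian satisfaction for infinitary formulas. -/
def Realize : ∀ {n : ℕ}, InfForm L n → ∀ (M : Type u), L.Structure M → (Fin n → M) → Prop
  | _, .equal t₁ t₂, _M, S, v => letI := S; t₁.realize v = t₂.realize v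
  | _, .rel R ts, _M, S, v => letI := S; Language.Structure.RelMap R fun i => (ts i).realize v
  | _, .not φ, M, S, v => ¬ Realize φ M S v
  | _, .disj Φ, M, S, v => ∃ i, Realize (Φ i) M S v
  | _, .conj Φ, M, S, v => ∀ i, Realize (Φ i) M S v
  | _, .ex φ, M, S, v => ∃ b : M, Realize φ M S (Fin.snoc v b)
  | _, .all φ, M, S, v => ∀ b : M, Realize φ M S (Fin.snoc v b)

/-- Elementary embeddings, with the structures made explicit. -/
abbrev ElemEmb (M N : Type u) (SM : L.Structure M) (SN : L.Structure N) : Type u :=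
  @FirstOrder.Language.ElementaryEmbedding L M N SM SN

/-- The strong forcing relation `A ⊩ ψ(ā)`, where conditions are structures
ordered by elementary extension. -/
def Forces : ∀ {n : ℕ}, InfForm L n → ∀ (M : Type u), L.Structure M → (Fin n → M) → Prop
  | _, .equal t₁ t₂, _M, S, v => letI := S; t₁.realize v = t₂.realize v
  | _, .rel R ts, _M, S, v => letI := S; Language.Structure.RelMap R fun i => (ts i).realize v
  | _, .not φ, M, S, v =>
      ∀ (N : Type u) (SN : L.Structure N) (f : ElemEmb M N S SN),
        ¬ Forces φ N SN (fun i => f.toFun (v i))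
  | _, .disj Φ, M, S, v => ∃ i, Forces (Φ i) M S v
  | _, .conj Φ, M, S, v =>
      ∀ (N : Type u) (SN : L.Structure N) (f : ElemEmb M N S SN) (i : _),
        ∃ (P : Type u) (SP : L.Structure P) (g : ElemEmb N P SN SP),
          Forces (Φ i) P SP (fun k => g.toFun (f.toFun (v k)))
  | _, .ex φ, M, S, v => ∃ b : M, Forces φ M S (Fin.snoc v b)
  | _, .all φ, M, S, v =>
      ∀ (N : Type u) (SN : L.Structure N) (f : ElemEmb M N S SN) (b : N),
        ∃ (P : Type u) (SP : L.Structure P) (g : ElemEmb N P SN SP),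
          Forces φ P SP (Fin.snoc (fun k => g.toFun (f.toFun (v k))) (g.toFun b))

/-- `M` decides `ψ(v)` if it strongly forces `ψ(v)` or `¬ψ(v)`. -/
def Decides {n : ℕ} (ψ : InfForm L n) (M : Type u) (S : L.Structure M) (v : Fin n → M) : Prop :=
  Forces ψ M S v ∨ Forces ψ.not M S v

/-- The weak forcing relation `A ⊩* ψ := A ⊩ ¬¬ψ`. -/
def WForces {n : ℕ} (ψ : InfForm L n) (M : Type u) (S : L.Structure M) (v : Fin n → M) : Prop :=
  Forces ψ.not.not M S v

variable (L)

/-- Finitary (`L_{ω,ω}`) formulas among the infinitary ones. -/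
inductive InfForm.IsFinitary : ∀ {n : ℕ}, InfForm L n → Prop
  | equal {n} (t₁ t₂ : L.Term (Fin n)) : IsFinitary (.equal t₁ t₂)
  | rel {n l} (R : L.Relations l) (ts : Fin l → L.Term (Fin n)) : IsFinitary (.rel R ts)
  | not {n} {φ : InfForm L n} : IsFinitary φ → IsFinitary φ.not
  | disj {n} {ι : Type u} (_ : Finite ι) {Φ : ι → InfForm L n} :
      (∀ i, IsFinitary (Φ i)) → IsFinitary (.disj Φ)
  | conj {n} {ι : Type u} (_ : Finite ι) {Φ : ι → InfForm L n} :
      (∀ i, IsFinitary (Φ i)) → IsFinitary (.conj Φ)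
  | ex {n} {φ : InfForm L (n + 1)} : IsFinitary φ → IsFinitary φ.ex
  | all {n} {φ : InfForm L (n + 1)} : IsFinitary φ → IsFinitary φ.all

/-- Quantifier-free infinitary formulas. -/
inductive InfForm.IsQF : ∀ {n : ℕ}, InfForm L n → Prop
  | equal {n} (t₁ t₂ : L.Term (Fin n)) : IsQF (.equal t₁ t₂)
  | rel {n l} (R : L.Relations l) (ts : Fin l → L.Term (Fin n)) : IsQF (.rel R ts)
  | not {n} {φ : InfForm L n} : IsQF φ → IsQF φ.not
  | disj {n} {ι : Type u} {Φ : ι → InfForm L n} : (∀ i, IsQF (Φ i)) → IsQF (.disj Φ)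
  | conj {n} {ι : Type u} {Φ : ι → InfForm L n} : (∀ i, IsQF (Φ i)) → IsQF (.conj Φ)

/-- `L_{ω₁,ω}` formulas: all conjunctions and disjunctions are countable. -/
inductive InfForm.IsCtble : ∀ {n : ℕ}, InfForm L n → Prop
  | equal {n} (t₁ t₂ : L.Term (Fin n)) : IsCtble (.equal t₁ t₂)
  | rel {n l} (R : L.Relations l) (ts : Fin l → L.Term (Fin n)) : IsCtble (.rel R ts)
  | not {n} {φ : InfForm L n} : IsCtble φ → IsCtble φ.not
  | disj {n} {ι : Type u} (_ : Countable ι) {Φ : ι → InfForm L n} :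
      (∀ i, IsCtble (Φ i)) → IsCtble (.disj Φ)
  | conj {n} {ι : Type u} (_ : Countable ι) {Φ : ι → InfForm L n} :
      (∀ i, IsCtble (Φ i)) → IsCtble (.conj Φ)
  | ex {n} {φ : InfForm L (n + 1)} : IsCtble φ → IsCtble φ.ex
  | all {n} {φ : InfForm L (n + 1)} : IsCtble φ → IsCtble φ.all

/-- A fragment of `L_{∞,ω}`: a family of sets of formulas closed under negation
and subformulas. -/
structure IsFragment (𝔸 : ∀ n : ℕ, Set (InfForm L n)) : Prop where
  not_mem : ∀ {n} {φ : InfForm L n}, φ ∈ 𝔸 n → φ.not ∈ 𝔸 n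
  of_not : ∀ {n} {φ : InfForm L n}, φ.not ∈ 𝔸 n → φ ∈ 𝔸 n
  of_disj : ∀ {n} {ι : Type u} {Φ : ι → InfForm L n}, InfForm.disj Φ ∈ 𝔸 n → ∀ i, Φ i ∈ 𝔸 n
  of_conj : ∀ {n} {ι : Type u} {Φ : ι → InfForm L n}, InfForm.conj Φ ∈ 𝔸 n → ∀ i, Φ i ∈ 𝔸 n
  of_ex : ∀ {n} {φ : InfForm L (n + 1)}, φ.ex ∈ 𝔸 n → φ ∈ 𝔸 (n + 1)
  of_all : ∀ {n} {φ : InfForm L (n + 1)}, φ.all ∈ 𝔸 n → φ ∈ 𝔸 (n + 1)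

variable {L}

/-- `G` is `𝔸`-generic if it decides every instance of every formula of `𝔸`. -/
def IsGeneric (𝔸 : ∀ n : ℕ, Set (InfForm L n)) (G : Type u) (SG : L.Structure G) : Prop :=
  ∀ (n : ℕ) (ψ : InfForm L n), ψ ∈ 𝔸 n → ∀ v : Fin n → G, Decides ψ G SG v

variable (L)

mutual
  /-- Finitary `∃ₙ` formulas: `n` alternating blocks of quantifiers beginning
  with existentials, counting finite conjunctions/disjunctions as free. -/
  inductive IsEx : ℕ → ∀ {k : ℕ}, InfForm L k → Prop
    | equal {m k} (t₁ t₂ : L.Term (Fin k)) : IsEx m (.equal t₁ t₂)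
    | rel {m k l} (R : L.Relations l) (ts : Fin l → L.Term (Fin k)) : IsEx m (.rel R ts)
    | not {m k} {φ : InfForm L k} : IsAll m φ → IsEx m φ.not
    | disj {m k} {ι : Type u} (_ : Finite ι) {Φ : ι → InfForm L k} :
        (∀ i, IsEx m (Φ i)) → IsEx m (.disj Φ)
    | conj {m k} {ι : Type u} (_ : Finite ι) {Φ : ι → InfForm L k} :
        (∀ i, IsEx m (Φ i)) → IsEx m (.conj Φ)
    | ex {m k} {φ : InfForm L (k + 1)} : IsEx m φ → 1 ≤ m → IsEx m φ.ex
    | exStep {m k} {φ : InfForm L (k + 1)} : IsAll m φ → IsEx (m + 1) φ.ex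

  /-- Finitary `∀ₙ` formulas. -/
  inductive IsAll : ℕ → ∀ {k : ℕ}, InfForm L k → Prop
    | equal {m k} (t₁ t₂ : L.Term (Fin k)) : IsAll m (.equal t₁ t₂)
    | rel {m k l} (R : L.Relations l) (ts : Fin l → L.Term (Fin k)) : IsAll m (.rel R ts)
    | not {m k} {φ : InfForm L k} : IsEx m φ → IsAll m φ.not
    | disj {m k} {ι : Type u} (_ : Finite ι) {Φ : ι → InfForm L k} :
        (∀ i, IsAll m (Φ i)) → IsAll m (.disj Φ)
    | conj {m k} {ι : Type u} (_ : Finite ι) {Φ : ι → InfForm L k} :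
        (∀ i, IsAll m (Φ i)) → IsAll m (.conj Φ)
    | all {m k} {φ : InfForm L (k + 1)} : IsAll m φ → 1 ≤ m → IsAll m φ.all
    | allStep {m k} {φ : InfForm L (k + 1)} : IsEx m φ → IsAll (m + 1) φ.all
end

/-- `f : A → B` is an `n`-elementary map (`A ⪯ₙ B` when `f` is an inclusion):
every finitary `∃ₙ` or `∀ₙ` formula transfers along `f`. -/
def IsNElemMap (n : ℕ) {A B : Type u} (SA : L.Structure A) (SB : L.Structure B)
    (f : A → B) : Prop :=
  ∀ (k : ℕ) (φ : InfForm L k), (IsEx L n φ ∨ IsAll L n φ) →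
    ∀ v : Fin k → A, Realize φ A SA v ↔ Realize φ B SB (fun i => f (v i))

/-- `f : A → B` is an elementary map: every finitary formula transfers along `f`. -/
def IsElemMap {A B : Type u} (SA : L.Structure A) (SB : L.Structure B)
    (f : A → B) : Prop :=
  ∀ (k : ℕ) (φ : InfForm L k), InfForm.IsFinitary L φ →
    ∀ v : Fin k → A, Realize φ A SA v ↔ Realize φ B SB (fun i => f (v i))

/-- The relations for the language of blocks: a unary `Q`, unary `P n` for each
`n : ℕ`, and a binary `R`. -/
inductive blockRel : ℕ → Type
  | Q : blockRel 1
  | P (n : ℕ) : blockRel 1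
  | R : blockRel 2

/-- The language with relations `Q`, `R`, and `Pₙ` for `n ∈ ℕ`. -/
def blockLang : FirstOrder.Language.{0, 0} := ⟨fun _ => Empty, blockRel⟩

/-- Binary disjunction of infinitary formulas. -/
def or2 {L : FirstOrder.Language.{0, 0}} {n : ℕ} (φ₁ φ₂ : InfForm L n) : InfForm L n :=
  .disj fun b : Bool => cond b φ₁ φ₂

/-- The sentence `ψ = ∀x (Q(x) → ∃y (R(x,y) ∧ ⋀ₙ ¬Pₙ(y)))`. -/
def psiBlock : InfForm blockLang 0 :=
  .all (or2 (.not (.rel blockRel.Q fun _ => FirstOrder.Language.Term.var 0))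
    (.ex (.conj fun o : Option ℕ =>
      match o with
      | none => .rel blockRel.R
          ![FirstOrder.Language.Term.var 0, FirstOrder.Language.Term.var 1]
      | some m => .not (.rel (blockRel.P m) fun _ => FirstOrder.Language.Term.var 1))))

/-!
Every elementary extension `B` of the union `A` of standard blocks satisfies `BlockAxioms`: each
child has a unique root as parent and at most one label, each root has exactly one child of each
label, and there are infinitely many roots. Between two models of these axioms, a correspondence of
finite tuples respecting `Q`, `R`, the sibling relation and the labels in a finite set `S` extends
by one more point on either side, so the tuples satisfy the same first-order formulas mentioning
only labels in `S`. Hence every embedding of models that preserves the atomic relations and whose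
image is closed under taking parents is elementary. Adjoining to `B` one new standard block gives
such an extension with a root all of whose children are labelled, so `ψ` fails there; adjoining a
new unlabelled child to every root of `B` gives one in which `ψ` holds.
-/

open Language Structure

abbrev relQ : blockLang.Relations 1 := blockRel.Q
abbrev relP (m : ℕ) : blockLang.Relations 1 := blockRel.P m
abbrev relR : blockLang.Relations 2 := blockRel.R

section Predicates

variable {M : Type} [blockLang.Structure M]

def IsRoot (x : M) : Prop := RelMap relQ ![x]

def HasLabel (m : ℕ) (y : M) : Prop := RelMap (relP m) ![y]

def IsChild (x y : M) : Prop := RelMap relR ![x, y]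

def Siblings (y z : M) : Prop := ∃ x : M, IsChild x y ∧ IsChild x z

@[simp] theorem relMap_relQ_iff (t : Fin 1 → M) : RelMap relQ t ↔ IsRoot (t 0) := by
  rw [IsRoot, show ![t 0] = t by ext i; fin_cases i; rfl]

@[simp] theorem relMap_relP_iff (m : ℕ) (t : Fin 1 → M) :
    RelMap (relP m) t ↔ HasLabel m (t 0) := by
  rw [HasLabel, show ![t 0] = t by ext i; fin_cases i; rfl]

@[simp] theorem relMap_relR_iff (t : Fin 2 → M) : RelMap relR t ↔ IsChild (t 0) (t 1) := by
  rw [IsChild, show ![t 0, t 1] = t by ext i; fin_cases i <;> rfl]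

end Predicates

theorem realize_psiBlock_iff {M : Type} [S : blockLang.Structure M] :
    Realize psiBlock M S Fin.elim0 ↔
      ∀ x : M, IsRoot x → ∃ y, IsChild x y ∧ ∀ m, ¬ HasLabel m y := by
  simp [psiBlock, Realize, or2, Fin.snoc, Option.forall, or_iff_not_imp_right]

/-- The root of the `k`-th block is `inl k`; its child labelled `m` is `inr (k, m)`. -/
def StdBlocks : Type := ℕ ⊕ ℕ × ℕ

instance : blockLang.Structure StdBlocks where
  funMap f := (f : Empty).elim
  RelMap := fun {l} r => match l, r with
    | _, .Q => fun t => ∃ k, t 0 = .inl k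
    | _, .P m => fun t => ∃ k, t 0 = .inr (k, m)
    | _, .R => fun t => ∃ k m, t 0 = .inl k ∧ t 1 = .inr (k, m)


structure BlockAxioms (M : Type) [blockLang.Structure M] : Prop where
  isRoot_of_isChild : ∀ x y : M, IsChild x y → IsRoot x
  not_isRoot_of_isChild : ∀ x y : M, IsChild x y → ¬ IsRoot y
  exists_parent : ∀ y : M, ¬ IsRoot y → ∃ x, IsChild x y
  parent_unique : ∀ x x' y : M, IsChild x y → IsChild x' y → x = x'
  not_isRoot_of_hasLabel : ∀ (m : ℕ) (y : M), HasLabel m y → ¬ IsRoot y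
  label_unique : ∀ (m m' : ℕ) (y : M), HasLabel m y → HasLabel m' y → m = m'
  exists_child : ∀ (m : ℕ) (x : M), IsRoot x → ∃ y, IsChild x y ∧ HasLabel m y
  child_unique : ∀ (m : ℕ) (x y y' : M), IsChild x y → IsChild x y' → HasLabel m y →
    HasLabel m y' → y = y'
  infinite_roots : {x : M | IsRoot x}.Infinite

theorem blockAxioms_stdBlocks : BlockAxioms StdBlocks where
  isRoot_of_isChild := by
    rintro _ _ ⟨k, m, rfl, rfl⟩
    exact ⟨k, rfl⟩
  not_isRoot_of_isChild := by
    rintro _ _ ⟨k, m, rfl, rfl⟩ ⟨_, ⟨⟩⟩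
  exists_parent := by
    rintro (k | ⟨k, m⟩) h
    · exact absurd ⟨k, rfl⟩ h
    · exact ⟨.inl k, k, m, rfl, rfl⟩
  parent_unique := by
    rintro _ _ _ ⟨k, m, rfl, rfl⟩ ⟨_, _, rfl, ⟨⟩⟩
    rfl
  not_isRoot_of_hasLabel := by
    rintro m _ ⟨k, rfl⟩ ⟨_, ⟨⟩⟩
  label_unique := by
    rintro m _ _ ⟨k, rfl⟩ ⟨_, ⟨⟩⟩
    rfl
  exists_child := by
    rintro m _ ⟨k, rfl⟩
    exact ⟨.inr (k, m), ⟨k, m, rfl, rfl⟩, k, rfl⟩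
  child_unique := by
    rintro m _ _ _ ⟨k, n, rfl, rfl⟩ ⟨_, _, ⟨⟩, rfl⟩ ⟨_, ⟨⟩⟩ ⟨_, ⟨⟩⟩
    rfl
  infinite_roots :=
    Set.infinite_of_injective_forall_mem Sum.inl_injective fun k => ⟨k, rfl⟩

section ElementaryExtension

attribute [local simp] Sentence.Realize Formula.Realize Fin.snoc

theorem BlockAxioms.of_elementaryEmbedding {M N : Type} [blockLang.Structure M]
    [blockLang.Structure N] (hM : BlockAxioms M) (f : M ↪ₑ[blockLang] N) : BlockAxioms N := by
  have transfer (σ : blockLang.Sentence) (h : M ⊨ σ) : N ⊨ σ := (f.map_sentence σ).1 h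
  refine ⟨?_, ?_, ?_, ?_, fun m => ?_, fun m m' => ?_, fun m => ?_, fun m => ?_, ?_⟩
  · simpa using transfer (∀' ∀' (relR.boundedFormula₂ &0 &1 ⟹ relQ.boundedFormula₁ &0))
      (by simpa using hM.isRoot_of_isChild)
  · simpa using transfer
      (∀' ∀' (relR.boundedFormula₂ &0 &1 ⟹ ∼(relQ.boundedFormula₁ &1)))
      (by simpa using hM.not_isRoot_of_isChild)
  · simpa using transfer
      (∀' (∼(relQ.boundedFormula₁ &0) ⟹ ∃' relR.boundedFormula₂ &1 &0))
      (by simpa using hM.exists_parent)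
  · simpa using transfer
      (∀' ∀' ∀' (relR.boundedFormula₂ &0 &2 ⟹ relR.boundedFormula₂ &1 &2 ⟹
        (&0 =' &1)))
      (by simpa using hM.parent_unique)
  · simpa using transfer (∀' ((relP m).boundedFormula₁ &0 ⟹ ∼(relQ.boundedFormula₁ &0)))
      (by simpa using hM.not_isRoot_of_hasLabel m)
  · intro y hm hm'
    by_contra hne
    have := transfer (∀' ((relP m).boundedFormula₁ &0 ⟹ ∼((relP m').boundedFormula₁ &0)))
      (by simpa using fun y hy hy' => hne (hM.label_unique m m' y hy hy'))
    simp only [Sentence.Realize, Formula.Realize, BoundedFormula.realize_all,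
      BoundedFormula.realize_imp, BoundedFormula.realize_not, BoundedFormula.realize_rel₁] at this
    exact this y (by simpa using hm) (by simpa using hm')
  · simpa using transfer (∀' (relQ.boundedFormula₁ &0 ⟹
      ∃' (relR.boundedFormula₂ &0 &1 ⊓ (relP m).boundedFormula₁ &1)))
      (by simpa using hM.exists_child m)
  · simpa using transfer
      (∀' ∀' ∀' (relR.boundedFormula₂ &0 &1 ⟹ relR.boundedFormula₂ &0 &2 ⟹
        (relP m).boundedFormula₁ &1 ⟹ (relP m).boundedFormula₁ &2 ⟹ (&1 =' &2)))
      (by simpa using hM.child_unique m)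
  · refine (hM.infinite_roots.image f.injective.injOn).mono
      (Set.image_subset_iff.2 fun x hx => ?_)
    have := (f.map_rel relQ ![x]).2 (by simpa using hx)
    rwa [relMap_relQ_iff] at this

end ElementaryExtension

section BackAndForth

variable {M N : Type} [blockLang.Structure M] [blockLang.Structure N]

theorem siblings_comm {y z : M} : Siblings y z ↔ Siblings z y :=
  ⟨fun ⟨x, hy, hz⟩ => ⟨x, hz, hy⟩, fun ⟨x, hz, hy⟩ => ⟨x, hy, hz⟩⟩

namespace BlockAxioms

theorem isChild_iff_eq_parent (hM : BlockAxioms M) {x y : M} (hxy : IsChild x y) (x' : M) :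
    IsChild x' y ↔ x' = x :=
  ⟨fun h => hM.parent_unique x' x y h hxy, fun h => h ▸ hxy⟩

theorem siblings_iff_isChild (hM : BlockAxioms M) {x y : M} (hxy : IsChild x y) (z : M) :
    Siblings y z ↔ IsChild x z :=
  ⟨fun ⟨x', hy, hz⟩ => hM.parent_unique x' x y hy hxy ▸ hz, fun hz => ⟨x, hxy, hz⟩⟩

theorem not_siblings_of_isRoot (hM : BlockAxioms M) {y : M} (hy : IsRoot y) (z : M) :
    ¬ Siblings y z :=
  fun ⟨x, hxy, _⟩ => hM.not_isRoot_of_isChild x y hxy hy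

theorem exists_fresh_root (hM : BlockAxioms M) {ι : Type} [Finite ι] (w : ι → M) :
    ∃ x, IsRoot x ∧ ∀ i, w i ≠ x ∧ ¬ IsChild x (w i) := by
  have hparents : {x : M | ∃ i, IsChild x (w i)}.Finite := by
    rw [Set.ofPred_exists]
    exact Set.finite_iUnion fun i => Set.Subsingleton.finite
      fun x hx x' hx' => hM.parent_unique x x' (w i) hx hx'
  obtain ⟨x, hx, hfresh⟩ :=
    (hM.infinite_roots.sdiff ((Set.finite_range w).union hparents)).nonempty
  simp only [Set.mem_union, Set.mem_range, Set.mem_ofPred_eq, not_or, not_exists] at hfresh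
  exact ⟨x, hx, fun i => ⟨hfresh.1 i, hfresh.2 i⟩⟩

theorem exists_fresh_label (hM : BlockAxioms M) {ι : Type} [Finite ι] (w : ι → M) {S : Set ℕ}
    (hS : S.Finite) :
    ∃ m ∉ S, ∀ i, ¬ HasLabel m (w i) := by
  have hlabels : {m : ℕ | ∃ i, HasLabel m (w i)}.Finite := by
    rw [Set.ofPred_exists]
    exact Set.finite_iUnion fun i => Set.Subsingleton.finite
      fun m hm m' hm' => hM.label_unique m m' (w i) hm hm'
  obtain ⟨m, hm⟩ := (hS.union hlabels).infinite_compl.nonempty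
  simp only [Set.mem_compl_iff, Set.mem_union, Set.mem_ofPred_eq, not_or, not_exists] at hm
  exact ⟨m, hm.1, hm.2⟩

end BlockAxioms

/-- `Siblings` is included so that these partial isomorphisms between models of `BlockAxioms`
extend by one point (`exists_cons`): a new child has to go to a child of the right root. -/
structure IsPartialIso (S : Set ℕ) {ι : Type} (v : ι → M) (w : ι → N) : Prop where
  eq_iff : ∀ i j, v i = v j ↔ w i = w j
  isRoot_iff : ∀ i, IsRoot (v i) ↔ IsRoot (w i)
  hasLabel_iff : ∀ m ∈ S, ∀ i, HasLabel m (v i) ↔ HasLabel m (w i)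
  isChild_iff : ∀ i j, IsChild (v i) (v j) ↔ IsChild (w i) (w j)
  siblings_iff : ∀ i j, Siblings (v i) (v j) ↔ Siblings (w i) (w j)

namespace IsPartialIso

variable {S : Set ℕ} {ι : Type} {v : ι → M} {w : ι → N}

theorem symm (h : IsPartialIso S v w) : IsPartialIso S w v :=
  ⟨fun i j => (h.eq_iff i j).symm, fun i => (h.isRoot_iff i).symm,
    fun m hm i => (h.hasLabel_iff m hm i).symm, fun i j => (h.isChild_iff i j).symm,
    fun i j => (h.siblings_iff i j).symm⟩

theorem comp (h : IsPartialIso S v w) {κ : Type} (σ : κ → ι) :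
    IsPartialIso S (v ∘ σ) (w ∘ σ) :=
  ⟨fun i j => h.eq_iff (σ i) (σ j), fun i => h.isRoot_iff (σ i),
    fun m hm i => h.hasLabel_iff m hm (σ i), fun i j => h.isChild_iff (σ i) (σ j),
    fun i j => h.siblings_iff (σ i) (σ j)⟩

theorem cons (h : IsPartialIso S v w) {b : M} {c : N}
    (heq : ∀ i, b = v i ↔ c = w i) (hroot : IsRoot b ↔ IsRoot c)
    (hlabel : ∀ m ∈ S, HasLabel m b ↔ HasLabel m c) (hchild : IsChild b b ↔ IsChild c c)
    (hchild_left : ∀ i, IsChild b (v i) ↔ IsChild c (w i))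
    (hchild_right : ∀ i, IsChild (v i) b ↔ IsChild (w i) c)
    (hsib : Siblings b b ↔ Siblings c c)
    (hsib_left : ∀ i, Siblings b (v i) ↔ Siblings c (w i)) :
    IsPartialIso S (Option.elim' b v) (Option.elim' c w) where
  eq_iff
    | none, none => iff_of_true rfl rfl
    | none, some j => heq j
    | some i, none => eq_comm.trans ((heq i).trans eq_comm)
    | some i, some j => h.eq_iff i j
  isRoot_iff
    | none => hroot
    | some i => h.isRoot_iff i
  hasLabel_iff
    | m, hm, none => hlabel m hm
    | m, hm, some i => h.hasLabel_iff m hm i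
  isChild_iff
    | none, none => hchild
    | none, some j => hchild_left j
    | some i, none => hchild_right i
    | some i, some j => h.isChild_iff i j
  siblings_iff
    | none, none => hsib
    | none, some j => hsib_left j
    | some i, none => siblings_comm.trans ((hsib_left i).trans siblings_comm)
    | some i, some j => h.siblings_iff i j

theorem cons_apply (h : IsPartialIso S v w) (j : ι) :
    IsPartialIso S (Option.elim' (v j) v) (Option.elim' (w j) w) := by
  convert h.comp (Option.elim' j id) using 1 <;> funext o <;> cases o <;> rfl

theorem cons_isRoot (hM : BlockAxioms M) (hN : BlockAxioms N) (h : IsPartialIso S v w)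
    {b : M} {c : N} (hb : IsRoot b) (hc : IsRoot c) (heq : ∀ i, b = v i ↔ c = w i)
    (hchild : ∀ i, IsChild b (v i) ↔ IsChild c (w i)) :
    IsPartialIso S (Option.elim' b v) (Option.elim' c w) :=
  h.cons heq (iff_of_true hb hc)
    (fun m _ => iff_of_false (hM.not_isRoot_of_hasLabel m b · hb)
      (hN.not_isRoot_of_hasLabel m c · hc))
    (iff_of_false (hM.not_isRoot_of_isChild b b · hb) (hN.not_isRoot_of_isChild c c · hc))
    hchild
    (fun _ => iff_of_false (hM.not_isRoot_of_isChild _ b · hb)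
      (hN.not_isRoot_of_isChild _ c · hc))
    (iff_of_false (hM.not_siblings_of_isRoot hb b) (hN.not_siblings_of_isRoot hc c))
    (fun _ => iff_of_false (hM.not_siblings_of_isRoot hb _) (hN.not_siblings_of_isRoot hc _))

theorem cons_isChild (hM : BlockAxioms M) (hN : BlockAxioms N) {b₀ b : M} {c₀ c : N}
    (h : IsPartialIso S (Option.elim' b₀ v) (Option.elim' c₀ w))
    (hb : IsChild b₀ b) (hc : IsChild c₀ c)
    (hlabel : ∀ m ∈ S, HasLabel m b ↔ HasLabel m c) (heq : ∀ i, b = v i ↔ c = w i) :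
    IsPartialIso S (Option.elim' b v) (Option.elim' c w) :=
  have hb' := hM.not_isRoot_of_isChild _ _ hb
  have hc' := hN.not_isRoot_of_isChild _ _ hc
  (h.comp some).cons heq (iff_of_false hb' hc') hlabel
    (iff_of_false (hb' <| hM.isRoot_of_isChild _ _ ·) (hc' <| hN.isRoot_of_isChild _ _ ·))
    (fun _ => iff_of_false (hb' <| hM.isRoot_of_isChild _ _ ·)
      (hc' <| hN.isRoot_of_isChild _ _ ·))
    (fun i => (hM.isChild_iff_eq_parent hb (v i)).trans
      ((h.eq_iff (some i) none).trans (hN.isChild_iff_eq_parent hc (w i)).symm))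
    (iff_of_true ⟨b₀, hb, hb⟩ ⟨c₀, hc, hc⟩)
    (fun i => (hM.siblings_iff_isChild hb (v i)).trans
      ((h.isChild_iff none (some i)).trans (hN.siblings_iff_isChild hc (w i)).symm))

theorem exists_cons_of_isRoot [Finite ι] (hM : BlockAxioms M) (hN : BlockAxioms N)
    (h : IsPartialIso S v w) {b : M} (hb : IsRoot b) :
    ∃ c, IsPartialIso S (Option.elim' b v) (Option.elim' c w) := by
  by_cases hbv : ∃ j, v j = b
  · obtain ⟨j, rfl⟩ := hbv
    exact ⟨w j, h.cons_apply j⟩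
  push Not at hbv
  by_cases hchild : ∃ j, IsChild b (v j)
  · obtain ⟨j, hj⟩ := hchild
    obtain ⟨c, hc⟩ := hN.exists_parent (w j)
      ((h.isRoot_iff j).not.1 (hM.not_isRoot_of_isChild _ _ hj))
    refine ⟨c, h.cons_isRoot hM hN hb (hN.isRoot_of_isChild _ _ hc) (fun i => ?_) (fun i => ?_)⟩
    · refine iff_of_false (fun e => hbv i e.symm) fun e => hbv i ?_
      exact hM.parent_unique _ _ _ ((h.isChild_iff i j).2 (e ▸ hc)) hj
    · rw [← hM.siblings_iff_isChild hj, ← hN.siblings_iff_isChild hc]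
      exact h.siblings_iff j i
  · push Not at hchild
    obtain ⟨c, hc, hfresh⟩ := hN.exists_fresh_root w
    exact ⟨c, h.cons_isRoot hM hN hb hc
      (fun i => iff_of_false (fun e => hbv i e.symm) fun e => (hfresh i).1 e.symm)
      (fun i => iff_of_false (hchild i) (hfresh i).2)⟩

theorem exists_cons [Finite ι] (hM : BlockAxioms M) (hN : BlockAxioms N) (hS : S.Finite)
    (h : IsPartialIso S v w) (b : M) :
    ∃ c, IsPartialIso S (Option.elim' b v) (Option.elim' c w) := by
  by_cases hbv : ∃ j, v j = b
  · obtain ⟨j, rfl⟩ := hbv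
    exact ⟨w j, h.cons_apply j⟩
  push Not at hbv
  by_cases hb : IsRoot b
  · exact h.exists_cons_of_isRoot hM hN hb
  obtain ⟨b₀, hb₀⟩ := hM.exists_parent b hb
  obtain ⟨c₀, h₀⟩ := h.exists_cons_of_isRoot hM hN (hM.isRoot_of_isChild _ _ hb₀)
  have hc₀ : IsRoot c₀ := (h₀.isRoot_iff none).1 (hM.isRoot_of_isChild _ _ hb₀)
  -- `c` copies the label of `b` if that label lies in `S`; otherwise any label outside `S`
  -- that no `w i` carries will do, and this is where `S` has to be finite.
  obtain ⟨c, hc, hlabel, hfresh⟩ : ∃ c, IsChild c₀ c ∧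
      (∀ m ∈ S, HasLabel m b ↔ HasLabel m c) ∧ ∀ i, w i ≠ c := by
    by_cases hlab : ∃ m ∈ S, HasLabel m b
    · obtain ⟨m, hmS, hm⟩ := hlab
      obtain ⟨c, hc, hcm⟩ := hN.exists_child m c₀ hc₀
      refine ⟨c, hc, fun m' _ => ⟨fun h' => hM.label_unique _ _ _ h' hm ▸ hcm,
        fun h' => hN.label_unique _ _ _ h' hcm ▸ hm⟩, fun i e => hbv i ?_⟩
      subst e
      exact hM.child_unique m b₀ _ _ ((h₀.isChild_iff none (some i)).2 hc) hb₀
        ((h₀.hasLabel_iff m hmS (some i)).2 hcm) hm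
    · push Not at hlab
      obtain ⟨m, hmS, hmw⟩ := hN.exists_fresh_label w hS
      obtain ⟨c, hc, hcm⟩ := hN.exists_child m c₀ hc₀
      exact ⟨c, hc, fun m' hm' => iff_of_false (hlab m' hm')
        (fun h' => hmS (hN.label_unique _ _ _ h' hcm ▸ hm')), fun i e => hmw i (e ▸ hcm)⟩
  exact ⟨c, h₀.cons_isChild hM hN hb₀ hc hlabel
    (fun i => iff_of_false (fun e => hbv i e.symm) fun e => hfresh i e.symm)⟩

end IsPartialIso

end BackAndForth

section Transfer

def relLabels : ∀ {l : ℕ}, blockLang.Relations l → Finset ℕ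
  | _, .P m => {m}
  | _, .Q => ∅
  | _, .R => ∅

def labels {α : Type} : ∀ {n : ℕ}, blockLang.BoundedFormula α n → Finset ℕ
  | _, .falsum => ∅
  | _, .equal _ _ => ∅
  | _, .rel r _ => relLabels r
  | _, .imp φ ψ => labels φ ∪ labels ψ
  | _, .all φ => labels φ

theorem term_eq_var {γ : Type} : ∀ t : blockLang.Term γ, ∃ i, t = var i
  | var i => ⟨i, rfl⟩
  | func f _ => (f : Empty).elim

theorem sumElim_snoc_eq_comp {α β : Type} {n : ℕ} (x : α → β) (v : Fin n → β) (b : β) :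
    Sum.elim x (Fin.snoc v b) = Option.elim' b (Sum.elim x v) ∘
      Sum.elim (some ∘ Sum.inl) (Fin.snoc (some ∘ Sum.inr) none) := by
  rw [Sum.comp_elim, Fin.comp_snoc]
  rfl

variable {M N : Type} [blockLang.Structure M] [blockLang.Structure N]

namespace IsPartialIso

variable {S : Set ℕ}

theorem relMap_iff {ι : Type} {v : ι → M} {w : ι → N} (h : IsPartialIso S v w) {l : ℕ}
    (r : blockLang.Relations l) (hr : ↑(relLabels r) ⊆ S) (s : Fin l → ι) :
    RelMap r (v ∘ s) ↔ RelMap r (w ∘ s) := by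
  cases r with
  | Q => simpa using h.isRoot_iff (s 0)
  | P m => simpa using h.hasLabel_iff m (hr (Finset.mem_singleton_self m)) (s 0)
  | R => simpa using h.isChild_iff (s 0) (s 1)

theorem sumElim_snoc {α : Type} {n : ℕ} {x : α → M} {v : Fin n → M} {x' : α → N}
    {v' : Fin n → N} {b : M} {c : N}
    (h : IsPartialIso S (Option.elim' b (Sum.elim x v)) (Option.elim' c (Sum.elim x' v'))) :
    IsPartialIso S (Sum.elim x (Fin.snoc v b)) (Sum.elim x' (Fin.snoc v' c)) := by
  rw [sumElim_snoc_eq_comp x v b, sumElim_snoc_eq_comp x' v' c]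
  exact h.comp _

theorem realize_iff (hM : BlockAxioms M) (hN : BlockAxioms N) (hS : S.Finite) {α : Type}
    [Finite α] {n : ℕ} (φ : blockLang.BoundedFormula α n) (hφ : ↑(labels φ) ⊆ S)
    {x : α → M} {v : Fin n → M} {x' : α → N} {v' : Fin n → N}
    (h : IsPartialIso S (Sum.elim x v) (Sum.elim x' v')) :
    φ.Realize x v ↔ φ.Realize x' v' := by
  induction φ with
  | falsum => exact Iff.rfl
  | equal t₁ t₂ =>
    obtain ⟨i, rfl⟩ := term_eq_var t₁
    obtain ⟨j, rfl⟩ := term_eq_var t₂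
    exact h.eq_iff i j
  | rel r ts =>
    choose s hs using fun i => term_eq_var (ts i)
    obtain rfl : ts = fun i => var (s i) := funext hs
    exact h.relMap_iff r hφ s
  | imp φ ψ ihφ ihψ =>
    simp only [labels, Finset.coe_union, Set.union_subset_iff] at hφ
    exact imp_congr (ihφ hφ.1 h) (ihψ hφ.2 h)
  | all φ ih =>
    refine ⟨fun H c => ?_, fun H b => ?_⟩
    · obtain ⟨b, hb⟩ := h.symm.exists_cons hN hM hS c
      exact (ih hφ hb.symm.sumElim_snoc).1 (H b)
    · obtain ⟨c, hc⟩ := h.exists_cons hM hN hS b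
      exact (ih hφ hc.sumElim_snoc).2 (H c)

end IsPartialIso

structure IsParentClosedEmbedding (g : M → N) : Prop where
  injective : Function.Injective g
  isRoot_iff : ∀ x, IsRoot (g x) ↔ IsRoot x
  hasLabel_iff : ∀ m x, HasLabel m (g x) ↔ HasLabel m x
  isChild_iff : ∀ x y, IsChild (g x) (g y) ↔ IsChild x y
  exists_eq_of_isChild : ∀ z y, IsChild z (g y) → ∃ x, g x = z

namespace IsParentClosedEmbedding

variable {g : M → N}

theorem isPartialIso_comp (hg : IsParentClosedEmbedding g) (S : Set ℕ) {ι : Type}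
    (v : ι → M) :
    IsPartialIso S v (g ∘ v) where
  eq_iff i j := hg.injective.eq_iff.symm
  isRoot_iff i := (hg.isRoot_iff (v i)).symm
  hasLabel_iff m _ i := (hg.hasLabel_iff m (v i)).symm
  isChild_iff i j := (hg.isChild_iff (v i) (v j)).symm
  siblings_iff i j := by
    refine ⟨fun ⟨x, hi, hj⟩ => ⟨g x, (hg.isChild_iff ..).2 hi, (hg.isChild_iff ..).2 hj⟩,
      fun ⟨z, hi, hj⟩ => ?_⟩
    obtain ⟨x, rfl⟩ := hg.exists_eq_of_isChild z (v i) hi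
    exact ⟨x, (hg.isChild_iff _ _).1 hi, (hg.isChild_iff _ _).1 hj⟩

def toElementaryEmbedding (hM : BlockAxioms M) (hN : BlockAxioms N)
    (hg : IsParentClosedEmbedding g) : M ↪ₑ[blockLang] N where
  toFun := g
  map_formula' n φ x := by
    have h := hg.isPartialIso_comp (labels φ) (Sum.elim x (default : Fin 0 → M))
    rw [Sum.comp_elim, Subsingleton.elim (g ∘ default) default] at h
    exact (IsPartialIso.realize_iff hM hN (Finset.finite_toSet _) φ subset_rfl h).symm

end IsParentClosedEmbedding

end Transfer

section NewBlock

variable {B : Type} [blockLang.Structure B]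

instance withNewBlock : blockLang.Structure (B ⊕ Option ℕ) where
  funMap f := (f : Empty).elim
  RelMap := fun {l} r => match l, r with
    | _, .Q => fun t => Sum.elim IsRoot (· = none) (t 0)
    | _, .P m => fun t => Sum.elim (HasLabel m) (· = some m) (t 0)
    | _, .R => fun t => match t 0, t 1 with
      | .inl x, .inl y => IsChild x y
      | .inr x, .inr y => x = none ∧ y ≠ none
      | _, _ => False

variable (x y : B) (o o' : Option ℕ)

@[simp] theorem withNewBlock_isRoot_inl : IsRoot (.inl x : B ⊕ Option ℕ) ↔ IsRoot x := Iff.rfl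
@[simp] theorem withNewBlock_isRoot_inr : IsRoot (.inr o : B ⊕ Option ℕ) ↔ o = none := Iff.rfl
@[simp] theorem withNewBlock_hasLabel_inl (m : ℕ) :
    HasLabel m (.inl x : B ⊕ Option ℕ) ↔ HasLabel m x := Iff.rfl
@[simp] theorem withNewBlock_hasLabel_inr (m : ℕ) :
    HasLabel m (.inr o : B ⊕ Option ℕ) ↔ o = some m := Iff.rfl
@[simp] theorem withNewBlock_isChild_inl_inl :
    IsChild (.inl x : B ⊕ Option ℕ) (.inl y) ↔ IsChild x y := Iff.rfl
@[simp] theorem withNewBlock_isChild_inl_inr : ¬ IsChild (.inl x : B ⊕ Option ℕ) (.inr o) := id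
@[simp] theorem withNewBlock_isChild_inr_inl : ¬ IsChild (.inr o : B ⊕ Option ℕ) (.inl x) := id
@[simp] theorem withNewBlock_isChild_inr_inr :
    IsChild (.inr o : B ⊕ Option ℕ) (.inr o') ↔ o = none ∧ o' ≠ none := Iff.rfl

theorem BlockAxioms.withNewBlock (hB : BlockAxioms B) : BlockAxioms (B ⊕ Option ℕ) where
  isRoot_of_isChild := by
    rintro (x | x) (y | y) h
    · exact hB.isRoot_of_isChild x y h
    all_goals simp_all
  not_isRoot_of_isChild := by
    rintro (x | x) (y | y) h
    · exact hB.not_isRoot_of_isChild x y h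
    all_goals simp_all
  exists_parent := by
    rintro (y | _ | m) h
    · obtain ⟨x, hx⟩ := hB.exists_parent y h
      exact ⟨.inl x, hx⟩
    · simp at h
    · exact ⟨.inr none, by simp⟩
  parent_unique := by
    rintro (x | x) (x' | x') (y | y) h h'
    · exact congrArg _ (hB.parent_unique x x' y h h')
    all_goals simp_all
  not_isRoot_of_hasLabel := by
    rintro m (y | y) h
    · exact hB.not_isRoot_of_hasLabel m y h
    · simp_all
  label_unique := by
    rintro m m' (y | y) h h'
    · exact hB.label_unique m m' y h h'
    · simp_all
  exists_child := by
    rintro m (x | x) h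
    · obtain ⟨y, hy, hym⟩ := hB.exists_child m x h
      exact ⟨.inl y, hy, hym⟩
    · exact ⟨.inr (some m), by simp_all⟩
  child_unique := by
    rintro m (x | x) (y | y) (y' | y') h h' hm hm'
    · exact congrArg _ (hB.child_unique m x y y' h h' hm hm')
    all_goals simp_all
  infinite_roots := (hB.infinite_roots.image Sum.inl_injective.injOn).mono
    (Set.image_subset_iff.2 fun _ => id)

theorem isParentClosedEmbedding_inl_withNewBlock :
    IsParentClosedEmbedding (Sum.inl : B → B ⊕ Option ℕ) where
  injective := Sum.inl_injective
  isRoot_iff := by simp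
  hasLabel_iff := by simp
  isChild_iff := by simp
  exists_eq_of_isChild := by
    rintro (z | z) y h
    · exact ⟨z, rfl⟩
    · simp at h

theorem not_realize_psiBlock_withNewBlock :
    ¬ Realize psiBlock (B ⊕ Option ℕ) withNewBlock Fin.elim0 := by
  rw [realize_psiBlock_iff]
  intro h
  obtain ⟨y | y, hy, hlabel⟩ := h (.inr none) (by simp)
  · simp at hy
  · obtain ⟨m, rfl⟩ := Option.ne_none_iff_exists'.1 (by simpa using hy)
    exact hlabel m (by simp)

end NewBlock

section UnlabeledChildren

variable {B : Type} [blockLang.Structure B]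

instance withUnlabeledChildren : blockLang.Structure (B ⊕ {x : B // IsRoot x}) where
  funMap f := (f : Empty).elim
  RelMap := fun {l} r => match l, r with
    | _, .Q => fun t => Sum.elim IsRoot (fun _ => False) (t 0)
    | _, .P m => fun t => Sum.elim (HasLabel m) (fun _ => False) (t 0)
    | _, .R => fun t => match t 0, t 1 with
      | .inl x, .inl y => IsChild x y
      | .inl x, .inr y => x = y.1
      | _, _ => False

variable (x y : B) (r r' : {x : B // IsRoot x})

@[simp] theorem withUnlabeledChildren_isRoot_inl :
    IsRoot (.inl x : B ⊕ {x : B // IsRoot x}) ↔ IsRoot x := Iff.rfl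
@[simp] theorem withUnlabeledChildren_isRoot_inr :
    ¬ IsRoot (.inr r : B ⊕ {x : B // IsRoot x}) := id
@[simp] theorem withUnlabeledChildren_hasLabel_inl (m : ℕ) :
    HasLabel m (.inl x : B ⊕ {x : B // IsRoot x}) ↔ HasLabel m x := Iff.rfl
@[simp] theorem withUnlabeledChildren_hasLabel_inr (m : ℕ) :
    ¬ HasLabel m (.inr r : B ⊕ {x : B // IsRoot x}) := id
@[simp] theorem withUnlabeledChildren_isChild_inl_inl :
    IsChild (.inl x : B ⊕ {x : B // IsRoot x}) (.inl y) ↔ IsChild x y := Iff.rfl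
@[simp] theorem withUnlabeledChildren_isChild_inl_inr :
    IsChild (.inl x : B ⊕ {x : B // IsRoot x}) (.inr r) ↔ x = r.1 := Iff.rfl
@[simp] theorem withUnlabeledChildren_isChild_inr_inl :
    ¬ IsChild (.inr r : B ⊕ {x : B // IsRoot x}) (.inl x) := id
@[simp] theorem withUnlabeledChildren_isChild_inr_inr :
    ¬ IsChild (.inr r : B ⊕ {x : B // IsRoot x}) (.inr r') := id

theorem BlockAxioms.withUnlabeledChildren (hB : BlockAxioms B) :
    BlockAxioms (B ⊕ {x : B // IsRoot x}) where
  isRoot_of_isChild := by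
    rintro (x | x) (y | y) h
    · exact hB.isRoot_of_isChild x y h
    · exact (show x = y.1 from h) ▸ y.2
    all_goals simp_all
  not_isRoot_of_isChild := by
    rintro (x | x) (y | y) h
    · exact hB.not_isRoot_of_isChild x y h
    all_goals simp_all
  exists_parent := by
    rintro (y | y) h
    · obtain ⟨x, hx⟩ := hB.exists_parent y h
      exact ⟨.inl x, hx⟩
    · exact ⟨.inl y.1, by simp⟩
  parent_unique := by
    rintro (x | x) (x' | x') (y | y) h h'
    · exact congrArg _ (hB.parent_unique x x' y h h')
    all_goals simp_all
  not_isRoot_of_hasLabel := by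
    rintro m (y | y) h
    · exact hB.not_isRoot_of_hasLabel m y h
    · simp_all
  label_unique := by
    rintro m m' (y | y) h h'
    · exact hB.label_unique m m' y h h'
    · simp_all
  exists_child := by
    rintro m (x | x) h
    · obtain ⟨y, hy, hym⟩ := hB.exists_child m x h
      exact ⟨.inl y, hy, hym⟩
    · simp at h
  child_unique := by
    rintro m (x | x) (y | y) (y' | y') h h' hm hm'
    · exact congrArg _ (hB.child_unique m x y y' h h' hm hm')
    all_goals simp_all
  infinite_roots := (hB.infinite_roots.image Sum.inl_injective.injOn).mono
    (Set.image_subset_iff.2 fun _ => id)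

theorem isParentClosedEmbedding_inl_withUnlabeledChildren :
    IsParentClosedEmbedding (Sum.inl : B → B ⊕ {x : B // IsRoot x}) where
  injective := Sum.inl_injective
  isRoot_iff := by simp
  hasLabel_iff := by simp
  isChild_iff := by simp
  exists_eq_of_isChild := by
    rintro (z | z) y h
    · exact ⟨z, rfl⟩
    · simp at h

theorem realize_psiBlock_withUnlabeledChildren :
    Realize psiBlock (B ⊕ {x : B // IsRoot x}) withUnlabeledChildren Fin.elim0 := by
  rw [realize_psiBlock_iff]
  rintro (x | x) hx
  · exact ⟨.inr ⟨x, hx⟩, by simp, by simp⟩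
  · simp at hx

end UnlabeledChildren

theorem isCtble_psiBlock : InfForm.IsCtble blockLang psiBlock := by
  refine .all (.disj inferInstance fun b => ?_)
  cases b with
  | true => exact .not (.rel _ _)
  | false =>
    refine .ex (.conj inferInstance fun o => ?_)
    cases o with
    | none => exact .rel _ _
    | some m => exact .not (.rel _ _)

/-- There is an `L_{ω₁,ω}` sentence `ψ` and a structure `A` such that every
elementary extension `B ⪰ A` satisfying `ψ` has a proper elementary extension
satisfying `¬ψ`, and every `B ⪰ A` satisfying `¬ψ` has a proper elementary
extension satisfying `ψ`. -/
theorem stmt19 :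
    ∃ (ψ : InfForm blockLang 0), InfForm.IsCtble blockLang ψ ∧
      ∃ (A : Type) (SA : blockLang.Structure A),
        ∀ (B : Type) (SB : blockLang.Structure B) (_ : ElemEmb A B SA SB),
          (Realize ψ B SB (fun i => i.elim0) →
            ∃ (C : Type) (SC : blockLang.Structure C) (g : ElemEmb B C SB SC),
              ¬ Function.Surjective g.toFun ∧ Realize ψ.not C SC (fun i => i.elim0)) ∧
          (Realize ψ.not B SB (fun i => i.elim0) →
            ∃ (C : Type) (SC : blockLang.Structure C) (g : ElemEmb B C SB SC),
              ¬ Function.Surjective g.toFun ∧ Realize ψ C SC (fun i => i.elim0)) := by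
  refine ⟨psiBlock, isCtble_psiBlock, StdBlocks, inferInstance, fun B SB f => ?_⟩
  have hB : BlockAxioms B := blockAxioms_stdBlocks.of_elementaryEmbedding f
  constructor
  · intro _
    refine ⟨_, withNewBlock,
      isParentClosedEmbedding_inl_withNewBlock.toElementaryEmbedding hB hB.withNewBlock,
      fun hsurj => ?_, not_realize_psiBlock_withNewBlock⟩
    obtain ⟨b, hb⟩ := hsurj (.inr none)
    exact Sum.inl_ne_inr hb
  · intro _
    refine ⟨_, withUnlabeledChildren,
      isParentClosedEmbedding_inl_withUnlabeledChildren.toElementaryEmbedding hB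
        hB.withUnlabeledChildren,
      fun hsurj => ?_, realize_psiBlock_withUnlabeledChildren⟩
    obtain ⟨r, hr⟩ := hB.infinite_roots.nonempty
    obtain ⟨b, hb⟩ := hsurj (.inr ⟨r, hr⟩)
    exact Sum.inl_ne_inr hb

end InfinitaryForcing
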